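/- Let α₂, μ₂, σ₂ > 0, r > 1, φ̂ > 1 with 1 + r > 2φ̂, and let γ ∈ (0,1). Define LH(φ) = α₂μ₂γφ^{γ−1} − α₂γφ^{γ+r−1} − α₂μ₂γφ^{−1} + α₂γφ^{r−1} + (σ₂²/2)γ(γ−1)φ^{γ+2φ̂−2} + (σ₂²/2)γφ^{2φ̂−2} for φ > 0. Then there exists a constant K₀ such that LH(φ) ≤ K₀ for all φ > 0. -/

import Mathlib

/-!
Of the six power terms, the curvature term `σ₂²/2 · γ(γ-1) φ^(γ+2φ̂-2)` is nonpositive, and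
`α₂μ₂γ (φ^(γ-1) - φ^(-1)) ≤ α₂μ₂γ` because the negative power `φ^(-1)` dominates near `0`.
Since `0 < 2φ̂ - 2 < r - 1`, the remaining positive terms are at most `(α₂γ + σ₂²γ/2)(1 + φ^(r-1))`,
which the term `-α₂γ φ^(γ+r-1)` of strictly larger exponent dominates at infinity.
-/

open Real Filter

lemma rpow_sub_rpow_le_one {φ s t : ℝ} (hφ : 0 < φ) (hts : t ≤ s) (hs : s ≤ 0) :
    φ ^ s - φ ^ t ≤ 1 := by
  rcases le_or_gt φ 1 with hφ1 | hφ1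
  · linarith [rpow_le_rpow_of_exponent_ge hφ hφ1 hts]
  · linarith [rpow_le_one_of_one_le_of_nonpos hφ1.le hs, rpow_pos_of_pos hφ t]

lemma rpow_le_one_add_rpow {φ s q : ℝ} (hφ : 0 ≤ φ) (hs : 0 ≤ s) (hsq : s ≤ q) :
    φ ^ s ≤ 1 + φ ^ q := by
  rcases le_or_gt φ 1 with hφ1 | hφ1
  · linarith [rpow_le_one hφ hφ1 hs, rpow_nonneg hφ q]
  · linarith [rpow_le_rpow_of_exponent_le hφ1.le hsq]

lemma exists_mul_rpow_sub_mul_rpow_le {a c q p : ℝ} (ha : 0 < a) (hq : 0 ≤ q) (hqp : q < p) :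
    ∃ K, ∀ φ : ℝ, 0 < φ → c * φ ^ q - a * φ ^ p ≤ K := by
  obtain ⟨M, hM⟩ := eventually_atTop.1
    ((tendsto_rpow_atTop (sub_pos.2 hqp)).eventually_ge_atTop (c / a))
  refine ⟨|c| * |M| ^ q, fun φ hφ => ?_⟩
  have hsplit : c * φ ^ q - a * φ ^ p = φ ^ q * (c - a * φ ^ (p - q)) := by
    rw [rpow_sub hφ]; field_simp [(rpow_pos_of_pos hφ q).ne']
  have hK : 0 ≤ |c| * |M| ^ q := by positivity
  rcases le_or_gt φ M with hφM | hMφ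
  · have hpow : φ ^ q ≤ |M| ^ q := rpow_le_rpow hφ.le (hφM.trans (le_abs_self M)) hq
    have hdrop : c * φ ^ q - a * φ ^ p ≤ c * φ ^ q := by
      linarith [mul_pos ha (rpow_pos_of_pos hφ p)]
    calc c * φ ^ q - a * φ ^ p ≤ c * φ ^ q := hdrop
      _ ≤ |c| * φ ^ q := mul_le_mul_of_nonneg_right (le_abs_self c) (rpow_nonneg hφ.le q)
      _ ≤ |c| * |M| ^ q := mul_le_mul_of_nonneg_left hpow (abs_nonneg c)
  · have hdom : c ≤ a * φ ^ (p - q) := (div_le_iff₀' ha).1 (hM φ hMφ.le)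
    rw [hsplit]
    exact (mul_nonpos_of_nonneg_of_nonpos (rpow_nonneg hφ.le q) (by linarith)).trans hK

theorem stmt3_general (α₂ μ₂ σ₂ r φh γ : ℝ) (hα : 0 < α₂) (hμ : 0 < μ₂)
    (hr : 1 < r) (hφh : 1 < φh) (hcond : 2 * φh < 1 + r) (hγ : γ ∈ Set.Ioo (0 : ℝ) 1) :
    ∃ K₀ : ℝ, ∀ φ : ℝ, 0 < φ →
      α₂ * μ₂ * γ * φ ^ (γ - 1) - α₂ * γ * φ ^ (γ + r - 1)
        - α₂ * μ₂ * γ * φ ^ (-1 : ℝ) + α₂ * γ * φ ^ (r - 1)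
        + σ₂ ^ 2 / 2 * γ * (γ - 1) * φ ^ (γ + 2 * φh - 2)
        + σ₂ ^ 2 / 2 * γ * φ ^ (2 * φh - 2) ≤ K₀ := by
  obtain ⟨hγ0, hγ1⟩ := hγ
  set b := σ₂ ^ 2 / 2 * γ
  have hb : 0 ≤ b := by positivity
  obtain ⟨K, hK⟩ := exists_mul_rpow_sub_mul_rpow_le (c := α₂ * γ + b) (mul_pos hα hγ0)
    (sub_pos.2 hr).le (show r - 1 < γ + r - 1 by linarith)
  refine ⟨α₂ * μ₂ * γ + b + K, fun φ hφ => ?_⟩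
  have hpole : α₂ * μ₂ * γ * (φ ^ (γ - 1) - φ ^ (-1 : ℝ)) ≤ α₂ * μ₂ * γ * 1 :=
    mul_le_mul_of_nonneg_left (rpow_sub_rpow_le_one hφ (by linarith) (by linarith))
      (by positivity)
  have hcurv : b * (γ - 1) * φ ^ (γ + 2 * φh - 2) ≤ 0 :=
    mul_nonpos_of_nonpos_of_nonneg (mul_nonpos_of_nonneg_of_nonpos hb (by linarith))
      (rpow_nonneg hφ.le _)
  have hvol : b * φ ^ (2 * φh - 2) ≤ b * (1 + φ ^ (r - 1)) :=
    mul_le_mul_of_nonneg_left (rpow_le_one_add_rpow hφ.le (by linarith) (by linarith)) hb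
  linarith [hK φ hφ]

/-- The Itô generator of `H(φ) = φ^γ − 1 − γ log φ` along the CEV-type volatility SDE
is bounded above on `(0,∞)`. -/
theorem stmt3 (α₂ μ₂ σ₂ r φh γ : ℝ) (hα : 0 < α₂) (hμ : 0 < μ₂) (hσ : 0 < σ₂)
    (hr : 1 < r) (hφh : 1 < φh) (hcond : 2 * φh < 1 + r) (hγ : γ ∈ Set.Ioo (0 : ℝ) 1) :
    ∃ K₀ : ℝ, ∀ φ : ℝ, 0 < φ →
      α₂ * μ₂ * γ * φ ^ (γ - 1) - α₂ * γ * φ ^ (γ + r - 1)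
        - α₂ * μ₂ * γ * φ ^ (-1 : ℝ) + α₂ * γ * φ ^ (r - 1)
        + σ₂ ^ 2 / 2 * γ * (γ - 1) * φ ^ (γ + 2 * φh - 2)
        + σ₂ ^ 2 / 2 * γ * φ ^ (2 * φh - 2) ≤ K₀ :=
  stmt3_general α₂ μ₂ σ₂ r φh γ hα hμ hr hφh hcond hγ
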